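/- With the notation of Theorem 1, the excess delay F(w*) − 2L/(ρ − log(1+ρ)) tends to infinity as L → ∞, and is Θ(√L); more precisely it equals √L · 2√(2(k−1))/(ρ − log(1+ρ)) · (1+o(1)). -/

import Mathlib

/-!
Put `A = ρ − log(1+ρ)`, `a = √(2(k−1))` and `ε = (k−1)/(w*ρ)`, so that `w* = a√L/A` and
`ε = β/√L` with `β = (k−1)A/(ρa)`. Then `c(w*) − 1 − log c(w*) = g(ε)` with `g(0) = A` and
`g'(0) = −ρ`, hence `√L · (1/g(β/√L) − 1/A) → βρ/A²`. Dividing the excess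
`2L(1/g(ε) − 1/A) + w*` by `2a√L/A` therefore gives `(k−1)/a² + 1/2 = 1`, and the excess itself
tends to infinity because `2a√L/A` does.
-/

open Filter Topology Real

theorem sub_log_one_add_pos {ρ : ℝ} (hρ : 0 < ρ) : 0 < ρ - log (1 + ρ) := by
  have := log_lt_sub_one_of_pos (x := 1 + ρ) (by linarith) (by linarith)
  linarith

theorem HasDerivAt.tendsto_mul_sub_div_atTop {f : ℝ → ℝ} {f' x : ℝ} (hf : HasDerivAt f f' x)
    (β : ℝ) : Tendsto (fun t => t * (f (x + β / t) - f x)) atTop (𝓝 (β * f')) := by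
  rcases eq_or_ne β 0 with rfl | hβ
  · simp
  have hstep : Tendsto (fun t : ℝ => β / t) atTop (𝓝[≠] 0) := by
    refine tendsto_nhdsWithin_iff.2 ⟨tendsto_const_nhds.div_atTop tendsto_id, ?_⟩
    filter_upwards [eventually_gt_atTop 0] with t ht
    exact div_ne_zero hβ ht.ne'
  refine ((hf.tendsto_slope_zero.comp hstep).const_mul β).congr' ?_
  filter_upwards [eventually_gt_atTop 0] with t ht
  simp only [Function.comp_apply, smul_eq_mul, inv_div]
  field_simp

theorem hasDerivAt_inv_sub_one_sub_log {ρ : ℝ} (hρ : 0 < ρ) :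
    HasDerivAt (fun ε => ((1 + ρ) * (1 - ε) - 1 - log ((1 + ρ) * (1 - ε)))⁻¹)
      (ρ / (ρ - log (1 + ρ)) ^ 2) 0 := by
  have hc : HasDerivAt (fun ε : ℝ => (1 + ρ) * (1 - ε)) (-(1 + ρ)) 0 := by
    simpa using ((hasDerivAt_id (0 : ℝ)).const_sub 1).const_mul (1 + ρ)
  have hgap : HasDerivAt (fun ε => (1 + ρ) * (1 - ε) - 1 - log ((1 + ρ) * (1 - ε))) (-ρ) 0 :=
    ((hc.sub_const 1).sub (hc.log (by simp; linarith))).congr_deriv (by field_simp; ring)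
  exact (hgap.inv (by simpa using (sub_log_one_add_pos hρ).ne')).congr_deriv (by simp)

theorem excess_div_eq {k ρ A a L : ℝ} (hρ : ρ ≠ 0) (hA : A ≠ 0) (ha : a ≠ 0) (hL : 0 < L) :
    (2 * L / ((1 + ρ) * (1 - (k - 1) / (√L * a / A * ρ)) - 1 -
          log ((1 + ρ) * (1 - (k - 1) / (√L * a / A * ρ)))) + √L * a / A - 2 * L / A) /
        (√L * (2 * a) / A) =
      A / a * (√L * (((1 + ρ) * (1 - (k - 1) * A / (ρ * a) / √L) - 1 -
          log ((1 + ρ) * (1 - (k - 1) * A / (ρ * a) / √L)))⁻¹ - A⁻¹)) + 1 / 2 := by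
  have hs : 0 < √L := sqrt_pos.2 hL
  have hε : (k - 1) / (√L * a / A * ρ) = (k - 1) * A / (ρ * a) / √L := by
    field_simp
  rw [hε]
  generalize (1 + ρ) * (1 - (k - 1) * A / (ρ * a) / √L) - 1 -
    log ((1 + ρ) * (1 - (k - 1) * A / (ρ * a) / √L)) = G
  field_simp
  linear_combination (2 - 2 * A * G⁻¹) * sq_sqrt hL.le

theorem tendsto_atTop_of_div_tendsto_one {g D : ℝ → ℝ} (hD : Tendsto D atTop atTop)
    (h : Tendsto (fun L => g L / D L) atTop (𝓝 1)) : Tendsto g atTop atTop := by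
  refine (h.pos_mul_atTop one_pos hD).congr' ?_
  filter_upwards [hD.eventually_gt_atTop 0] with L hL
  exact div_mul_cancel₀ _ hL.ne'

/-- The excess delay `F L w* − 2L/(ρ − log(1+ρ))` tends to infinity as `L → ∞`
and equals `√L·2√(2(k−1))/(ρ − log(1+ρ))·(1+o(1))` (in particular it is `Θ(√L)`). -/
theorem stmt13 (k : ℕ) (hk : 2 ≤ k) (ρ : ℝ) (hρ : 0 < ρ)
    (c : ℝ → ℝ) (hc : c = fun w => (1 + ρ) * (1 - ((k : ℝ) - 1) / (w * ρ)))
    (F : ℝ → ℝ → ℝ)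
    (hF : F = fun L w => 2 * L / (c w - 1 - Real.log (c w)) + w)
    (wstar : ℝ → ℝ)
    (hwstar : wstar = fun L =>
      Real.sqrt L * Real.sqrt (2 * ((k : ℝ) - 1)) / (ρ - Real.log (1 + ρ))) :
    Tendsto (fun L => F L (wstar L) - 2 * L / (ρ - Real.log (1 + ρ))) atTop atTop ∧
    Tendsto (fun L =>
        (F L (wstar L) - 2 * L / (ρ - Real.log (1 + ρ))) /
          (Real.sqrt L * (2 * Real.sqrt (2 * ((k : ℝ) - 1))) / (ρ - Real.log (1 + ρ))))
      atTop (nhds 1) := by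
  subst hF hc hwstar
  have hk1 : (0 : ℝ) < k - 1 := by
    have : (2 : ℝ) ≤ k := by exact_mod_cast hk
    linarith
  have hA := sub_log_one_add_pos hρ
  have ha : 0 < √(2 * ((k : ℝ) - 1)) := sqrt_pos.2 (by linarith)
  have ha2 : √(2 * ((k : ℝ) - 1)) ^ 2 = 2 * (k - 1) := sq_sqrt (by linarith)
  have hlim := ((hasDerivAt_inv_sub_one_sub_log hρ).tendsto_mul_sub_div_atTop
    ((k - 1) * (ρ - log (1 + ρ)) / (ρ * √(2 * ((k : ℝ) - 1))))).comp tendsto_sqrt_atTop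
  simp only [zero_add, sub_zero, mul_one, add_sub_cancel_left] at hlim
  set A := ρ - log (1 + ρ)
  set a := √(2 * ((k : ℝ) - 1))
  clear_value A a
  have hval : A / a * ((k - 1) * A / (ρ * a) * (ρ / A ^ 2)) + 1 / 2 = 1 := by
    field_simp
    linear_combination -ha2
  have hratio := (hlim.const_mul (A / a)).add_const (1 / 2)
  rw [hval] at hratio
  refine (fun h => ⟨tendsto_atTop_of_div_tendsto_one ?_ h, h⟩) ?_
  · refine hratio.congr' ?_
    filter_upwards [eventually_gt_atTop 0] with L hL
    exact (excess_div_eq hρ.ne' hA.ne' ha.ne' hL).symm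
  · exact (tendsto_sqrt_atTop.atTop_mul_const (by positivity)).atTop_div_const hA
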